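/- Let φ ∈ C_c^∞(ℝ²) with supp φ ⊂ B(0,1), and for ε > 0 set φ^ε(y) = ε^{−2} φ(y/ε). Let v : ℝ² → ℝ² be bounded with finite Hölder seminorm [v]_{2/3} = sup_{x≠y} |v(x)−v(y)|/|x−y|^{2/3}. Then there is a constant C depending only on φ such that for every x ∈ ℝ² and every ε > 0: |∫_{ℝ²} ∇φ^ε(y) · (v(x+y) − v(x)) |v(x+y) − v(x)|² dy| ≤ C ε [v]_{2/3}³. -/

import Mathlib

noncomputable section
open MeasureTheory Set
open scoped ENNReal

/-- The plane `ℝ²`. -/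
abbrev E2 : Type := EuclideanSpace ℝ (Fin 2)

/-- The `i`-th standard basis vector of `ℝ²`. -/
def e2 (i : Fin 2) : E2 := EuclideanSpace.single i 1

lemma abs_coord_le_norm (w : E2) (i : Fin 2) : |w i| ≤ ‖w‖ := by
  rw [EuclideanSpace.norm_eq, ← Real.sqrt_sq_eq_abs]
  apply Real.sqrt_le_sqrt
  exact Finset.single_le_sum (f := fun j => ‖w j‖ ^ 2)
    (fun j _ => sq_nonneg _) (Finset.mem_univ i) |>.trans_eq' (by rw [Real.norm_eq_abs, sq_abs])

lemma holder_continuous {v : E2 → E2} {H : ℝ}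
    (hH : ∀ x y : E2, ‖v x - v y‖ ≤ H * ‖x - y‖ ^ ((2:ℝ)/3)) : Continuous v := by
  rw [continuous_iff_continuousAt]
  intro x
  rw [ContinuousAt, tendsto_iff_dist_tendsto_zero]
  have hd : Filter.Tendsto (fun y : E2 => dist y x) (nhds x) (nhds 0) := by
    simpa using (continuous_id.dist (continuous_const (y := x))).tendsto x
  have h2 := (Real.continuousAt_rpow_const 0 ((2:ℝ)/3) (Or.inr (by norm_num))).tendsto
  have h1 : Filter.Tendsto (fun y => H * dist y x ^ ((2:ℝ)/3)) (nhds x) (nhds 0) := by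
    have := Filter.Tendsto.const_mul H (h2.comp hd)
    simpa [Real.zero_rpow] using this
  apply squeeze_zero (fun y => dist_nonneg) _ h1
  intro y
  rw [dist_eq_norm, dist_eq_norm]
  exact hH y x

/-- **The Duchon-Robert flux estimate for Hölder fields** (Cozzi, proof of Lemma 3.2).
For a mollifier `φ` supported in the unit ball, `φ^ε(y) = ε^{-2} φ(y/ε)` (so
`∇φ^ε(y) = ε^{-3} (∇φ)(y/ε)`), and a bounded `v : ℝ² → ℝ²` with finite `2/3`-Hölder
seminorm `H`, one has
`|∫ ∇φ^ε(y) · δv(y) |δv(y)|² dy| ≤ C ε H³`, where `δv(y) = v(x+y) - v(x)`. -/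
theorem duchon_robert_flux_estimate
    (φ : E2 → ℝ) (hφ_smooth : ContDiff ℝ (⊤ : ℕ∞) φ) (hφ_supp : HasCompactSupport φ)
    (hφ_ball : tsupport φ ⊆ Metric.closedBall 0 1) :
    ∃ C > (0:ℝ), ∀ (v : E2 → E2) (M H : ℝ),
      (∀ x, ‖v x‖ ≤ M) →
      (∀ x y : E2, ‖v x - v y‖ ≤ H * ‖x - y‖ ^ ((2:ℝ)/3)) →
      ∀ (x : E2) (ε : ℝ), 0 < ε →
        |∫ y, (∑ i, (ε ^ 3)⁻¹ * fderiv ℝ φ (ε⁻¹ • y) (e2 i) * (v (x + y) i - v x i))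
            * ‖v (x + y) - v x‖ ^ 2| ≤ C * ε * H ^ 3 := by
  obtain ⟨K, hK⟩ := (hφ_supp.fderiv (𝕜 := ℝ)).exists_bound_of_continuous
    (hφ_smooth.continuous_fderiv (by simp))
  have hK0 : 0 ≤ K := le_trans (norm_nonneg _) (hK 0)
  set V : ℝ := (volume (Metric.ball (0:E2) 1)).toReal with hV
  have hV0 : 0 ≤ V := ENNReal.toReal_nonneg
  refine ⟨2 * K * V + 1, by positivity, ?_⟩
  intro v M H hM hH x ε hε
  have hH0 : (0:ℝ) ≤ H := by
    have h := hH 0 (e2 0)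
    rw [zero_sub, norm_neg] at h
    have he : ‖e2 0‖ = 1 := by simp [e2, EuclideanSpace.norm_single]
    rw [he, Real.one_rpow, mul_one] at h
    exact le_trans (norm_nonneg _) h
  have hv : Continuous v := holder_continuous hH
  set f : E2 → ℝ := fun y =>
    (∑ i, (ε ^ 3)⁻¹ * fderiv ℝ φ (ε⁻¹ • y) (e2 i) * (v (x + y) i - v x i))
      * ‖v (x + y) - v x‖ ^ 2 with hf
  -- f vanishes outside closedBall 0 ε
  have hzero : ∀ y ∉ Metric.closedBall (0:E2) ε, f y = 0 := by
    intro y hy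
    have hy' : ε < ‖y‖ := by
      simpa [Metric.mem_closedBall, dist_zero_right, not_le] using hy
    have h1 : ε⁻¹ • y ∉ tsupport φ := by
      intro hmem
      have h := hφ_ball hmem
      rw [Metric.mem_closedBall, dist_zero_right, norm_smul, norm_inv,
        Real.norm_eq_abs, abs_of_pos hε] at h
      have : ε⁻¹ * ε < ε⁻¹ * ‖y‖ := by
        exact mul_lt_mul_of_pos_left hy' (inv_pos.mpr hε)
      rw [inv_mul_cancel₀ hε.ne'] at this
      linarith
    have h2 : fderiv ℝ φ (ε⁻¹ • y) = 0 := by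
      by_contra h
      exact h1 (support_fderiv_subset ℝ (by simpa [Function.mem_support] using h))
    simp [hf, h2]
  -- pointwise bound on the ball
  set B : ℝ := 2 * (ε ^ 3)⁻¹ * K * (H ^ 3 * ε ^ 2) with hB
  have hbound : ∀ y ∈ Metric.closedBall (0:E2) ε, ‖f y‖ ≤ B := by
    intro y hy
    rw [Metric.mem_closedBall, dist_zero_right] at hy
    set δ : E2 := v (x + y) - v x with hδ
    have hδle : ‖δ‖ ≤ H * ε ^ ((2:ℝ)/3) := by
      have h := hH (x + y) x
      simp only [add_sub_cancel_left] at h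
      refine h.trans ?_
      gcongr
    have hterm : ∀ i : Fin 2, |(ε ^ 3)⁻¹ * fderiv ℝ φ (ε⁻¹ • y) (e2 i) * (v (x + y) i - v x i)|
        ≤ (ε ^ 3)⁻¹ * K * ‖δ‖ := by
      intro i
      rw [abs_mul, abs_mul, abs_inv, abs_pow, abs_of_pos hε]
      have h1 : |fderiv ℝ φ (ε⁻¹ • y) (e2 i)| ≤ K := by
        refine le_trans ?_ (hK (ε⁻¹ • y))
        calc |fderiv ℝ φ (ε⁻¹ • y) (e2 i)| = ‖fderiv ℝ φ (ε⁻¹ • y) (e2 i)‖ := rfl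
          _ ≤ ‖fderiv ℝ φ (ε⁻¹ • y)‖ * ‖e2 i‖ := (fderiv ℝ φ (ε⁻¹ • y)).le_opNorm _
          _ = ‖fderiv ℝ φ (ε⁻¹ • y)‖ := by
              simp [e2, EuclideanSpace.norm_single]
      have h2 : |v (x + y) i - v x i| ≤ ‖δ‖ := by
        have := abs_coord_le_norm δ i
        simpa [hδ] using this
      have hεp : (0:ℝ) ≤ (ε ^ 3)⁻¹ := by positivity
      exact mul_le_mul (mul_le_mul_of_nonneg_left h1 hεp) h2 (abs_nonneg _) (by positivity)
    have hsum : |∑ i, (ε ^ 3)⁻¹ * fderiv ℝ φ (ε⁻¹ • y) (e2 i) * (v (x + y) i - v x i)|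
        ≤ 2 * (ε ^ 3)⁻¹ * K * ‖δ‖ := by
      refine (Finset.abs_sum_le_sum_abs _ _).trans ?_
      refine (Finset.sum_le_sum fun i _ => hterm i).trans_eq ?_
      rw [Finset.sum_const, Finset.card_univ, Fintype.card_fin]
      ring
    have hδ3 : ‖δ‖ ^ 3 ≤ H ^ 3 * ε ^ 2 := by
      have := pow_le_pow_left₀ (norm_nonneg δ) hδle 3
      refine this.trans_eq ?_
      rw [mul_pow, ← Real.rpow_natCast (ε ^ ((2:ℝ)/3)) 3, ← Real.rpow_mul hε.le]
      norm_num
    calc ‖f y‖ = |∑ i, (ε ^ 3)⁻¹ * fderiv ℝ φ (ε⁻¹ • y) (e2 i) * (v (x + y) i - v x i)|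
          * ‖δ‖ ^ 2 := by
          rw [hf]; simp only [Real.norm_eq_abs, abs_mul, abs_pow, abs_norm]; rfl
      _ ≤ (2 * (ε ^ 3)⁻¹ * K * ‖δ‖) * ‖δ‖ ^ 2 := by
          exact mul_le_mul_of_nonneg_right hsum (by positivity)
      _ = 2 * (ε ^ 3)⁻¹ * K * ‖δ‖ ^ 3 := by ring
      _ ≤ B := by rw [hB]; gcongr
  -- measurability
  have hDc : Continuous (fderiv ℝ φ) := hφ_smooth.continuous_fderiv (by simp)
  have hfc : Continuous f := by
    apply Continuous.mul
    · apply continuous_finset_sum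
      intro i _
      apply Continuous.mul
      · exact continuous_const.mul ((hDc.comp (continuous_const_smul _)).clm_apply
          continuous_const)
      · exact (((EuclideanSpace.proj i : E2 →L[ℝ] ℝ).continuous.comp
          (hv.comp (continuous_const.add continuous_id))).sub
          ((EuclideanSpace.proj i : E2 →L[ℝ] ℝ).continuous.comp continuous_const))
    · exact (((hv.comp (continuous_const.add continuous_id)).sub continuous_const).norm.pow 2)
  -- reduce to set integral
  rw [← setIntegral_eq_integral_of_forall_compl_eq_zero hzero]
  have hmeas : volume (Metric.closedBall (0:E2) ε) = ENNReal.ofReal (ε ^ 2) * volume (Metric.ball (0:E2) 1) := by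
    rw [Measure.addHaar_closedBall volume (0:E2) hε.le, finrank_euclideanSpace_fin]
  have hfin : volume (Metric.closedBall (0:E2) ε) < ∞ :=
    (isCompact_closedBall _ _).measure_lt_top
  have key := norm_setIntegral_le_of_norm_le_const (μ := volume)
    (s := Metric.closedBall (0:E2) ε) hfin hbound
  rw [Real.norm_eq_abs] at key
  refine key.trans ?_
  have htr : volume.real (Metric.closedBall (0:E2) ε) = ε ^ 2 * V := by
    rw [Measure.real, hmeas, ENNReal.toReal_mul, ENNReal.toReal_ofReal (by positivity)]
  rw [htr, hB]
  have hεne : (ε:ℝ) ≠ 0 := hε.ne'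
  have : 2 * (ε ^ 3)⁻¹ * K * (H ^ 3 * ε ^ 2) * (ε ^ 2 * V) = 2 * K * V * ε * H ^ 3 := by
    field_simp
  rw [this]
  nlinarith [mul_pos hε (pow_pos hε 2), pow_nonneg hH0 3, mul_nonneg (mul_nonneg hK0 hV0) (mul_nonneg hε.le (pow_nonneg hH0 3))]
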